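/- (Harmonic product formula for the polynomial-valued regularization.) Extend ζ*_{x,y}(·;T) ℚ-linearly to the ℚ-vector space spanned by indices. Then for all indices k and l, ζ*_{x,y}(k;T) · ζ*_{x,y}(l;T) = ζ*_{x,y}(k * l;T) in ℝ[x,y,T]. -/

import Mathlib

open scoped BigOperators

/-- The Riemann zeta value ζ(n) = Σ_{m ≥ 1} 1/mⁿ. -/
noncomputable def rzeta (n : ℕ) : ℝ := ∑' m : ℕ+, 1 / (m : ℝ) ^ n

/-- The multiple zeta value ζ(k₁,…,k_r) = Σ_{m₁ > ⋯ > m_r ≥ 1} 1/(m₁^{k₁} ⋯ m_r^{k_r}). -/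
noncomputable def mzv (k : List ℕ) : ℝ :=
  ∑' m : {m : Fin k.length → ℕ+ // StrictAnti m}, ∏ i, 1 / ((m.1 i : ℝ) ^ k.get i)

/-- An index is a finite sequence of positive integers. -/
def IsIndex (k : List ℕ) : Prop := ∀ a ∈ k, 1 ≤ a

/-- An index is admissible if it is empty or its first entry exceeds 1. -/
def IsAdmissible (k : List ℕ) : Prop := ∀ a ∈ k.head?, 2 ≤ a

/-- Auxiliary harmonic product, on *reversed* indices (peeling the last entries). -/
noncomputable def harmAux : List ℕ → List ℕ → (List ℕ →₀ ℚ)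
  | [], b => Finsupp.single b 1
  | a, [] => Finsupp.single a 1
  | ka :: as, lb :: bs =>
      Finsupp.mapDomain (lb :: ·) (harmAux (ka :: as) bs)
      + Finsupp.mapDomain (ka :: ·) (harmAux as (lb :: bs))
      + Finsupp.mapDomain ((ka + lb) :: ·) (harmAux as bs)

/-- The harmonic (stuffle) product of two indices, as an element of the
ℚ-vector space freely spanned by indices. -/
noncomputable def harm (k l : List ℕ) : List ℕ →₀ ℚ :=
  Finsupp.mapDomain List.reverse (harmAux k.reverse l.reverse)

/-- The word 0^{k₁-1}1 ⋯ 0^{k_r-1}1 associated to an index. -/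
def indexToWord (k : List ℕ) : List Bool :=
  k.flatMap fun a => List.replicate (a - 1) false ++ [true]

/-- Parse a word in letters 0, 1 back into an index. -/
def wordToIndex : List Bool → List ℕ
  | [] => []
  | true :: w => 1 :: wordToIndex w
  | false :: w =>
      match wordToIndex w with
      | [] => []
      | a :: rest => (a + 1) :: rest

/-- The shuffle product of two words. -/
noncomputable def wordShuffle : List Bool → List Bool → (List Bool →₀ ℚ)
  | [], b => Finsupp.single b 1
  | a, [] => Finsupp.single a 1
  | x :: xs, y :: ys =>
      Finsupp.mapDomain (x :: ·) (wordShuffle xs (y :: ys))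
      + Finsupp.mapDomain (y :: ·) (wordShuffle (x :: xs) ys)

/-- The shuffle product of two indices, as an element of the
ℚ-vector space freely spanned by indices. -/
noncomputable def shuf (k l : List ℕ) : List ℕ →₀ ℚ :=
  Finsupp.mapDomain wordToIndex (wordShuffle (indexToWord k) (indexToWord l))

/-- ℚ-linear extension of a map defined on indices. -/
noncomputable def Zext (Z : List ℕ → Polynomial ℝ) (v : List ℕ →₀ ℚ) : Polynomial ℝ :=
  v.sum fun m c => c • Z m

/-- Exponential of a formal power series (with zero constant term) over a field. -/
noncomputable def pexp {R : Type*} [Field R] (f : PowerSeries R) : PowerSeries R :=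
  PowerSeries.mk fun n =>
    ∑ m ∈ Finset.range (n + 1), PowerSeries.coeff n (f ^ m) / (m.factorial : R)

/-- A(u) = exp(Σ_{n≥2} ((-1)ⁿ/n) ζ(n) uⁿ) ∈ ℝ[[u]]. -/
noncomputable def Aseries : PowerSeries ℝ :=
  pexp (PowerSeries.mk fun n => if 2 ≤ n then (-1 : ℝ) ^ n / n * rzeta n else 0)

/-- The linear map ρ determined by ρ(Tᵐ/m!) = (coefficient of uᵐ in A(u)e^{Tu}),
i.e. ρ(Tᵐ) = m! Σ_{j≤m} A_{m-j} Tʲ/j!. -/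
noncomputable def rho {R : Type*} [Field R] (A : PowerSeries R) (P : Polynomial R) :
    Polynomial R :=
  P.sum fun m a =>
    a • (m.factorial : R) •
      ∑ j ∈ Finset.range (m + 1),
        (PowerSeries.coeff (m - j) A / (j.factorial : R)) • (Polynomial.X : Polynomial R) ^ j

/-- ζ*_{x,y}(k;T) = Σ_{i=0}^{r} x^{k₁+⋯+kᵢ} y^{k_{i+1}+⋯+k_r}
Z*(kᵢ,…,k₁;T)·Z*(k_{i+1},…,k_r;T) as an element of ℝ[x,y,T],
where x, y, T are the variables X 0, X 1, X 2. -/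
noncomputable def zetaXYpoly (Z : List ℕ → Polynomial ℝ) (k : List ℕ) :
    MvPolynomial (Fin 3) ℝ :=
  ∑ i ∈ Finset.range (k.length + 1),
    MvPolynomial.X 0 ^ (k.take i).sum * MvPolynomial.X 1 ^ (k.drop i).sum
      * Polynomial.aeval (MvPolynomial.X 2) (Z (k.take i).reverse)
      * Polynomial.aeval (MvPolynomial.X 2) (Z (k.drop i))


/-!
Write `Δk = ∑ᵢ (k₁,…,kᵢ) ⊗ (kᵢ₊₁,…,k_r)` for the deconcatenation coproduct. Following the recursion
of `*` on first entries one checks `Δ(k * l) = Δk * Δl`, the product on the right being `*` in each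
tensor factor. Now `ζ*_{x,y} = m ∘ (φ ⊗ ψ) ∘ Δ` with `φ(p) = x^{wt p} Z*(p reversed)` and
`ψ(s) = y^{wt s} Z*(s)`, and both `φ` and `ψ` are multiplicative for `*`: the weight is additive on
`k * l`, reversal commutes with `*`, and `Z*` is multiplicative by hypothesis.
-/

open Finsupp (linearCombination mapDomain)

section HarmAux

@[simp] lemma harmAux_nil_left (b : List ℕ) : harmAux [] b = Finsupp.single b 1 := by
  rw [harmAux]

@[simp] lemma harmAux_nil_right (a : List ℕ) : harmAux a [] = Finsupp.single a 1 := by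
  cases a <;> simp [harmAux]

lemma harmAux_cons_cons (x y : ℕ) (xs ys : List ℕ) :
    harmAux (x :: xs) (y :: ys) =
      mapDomain (y :: ·) (harmAux (x :: xs) ys) + mapDomain (x :: ·) (harmAux xs (y :: ys))
        + mapDomain ((x + y) :: ·) (harmAux xs ys) := by
  rw [harmAux]

lemma harmAux_append_singleton (a b : ℕ) (as bs : List ℕ) :
    harmAux (as ++ [a]) (bs ++ [b]) =
      mapDomain (· ++ [b]) (harmAux (as ++ [a]) bs) + mapDomain (· ++ [a]) (harmAux as (bs ++ [b]))
        + mapDomain (· ++ [a + b]) (harmAux as bs) := by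
  induction as generalizing bs with
  | nil =>
    induction bs with
    | nil => simp [harmAux_cons_cons, add_comm]
    | cons c cs ih =>
      simp only [List.nil_append, List.cons_append] at ih ⊢
      rw [harmAux_cons_cons, ih, harmAux_cons_cons a c [] cs]
      simp only [harmAux_nil_left, Finsupp.mapDomain_add, Finsupp.mapDomain_single,
        ← Finsupp.mapDomain_comp, Function.comp_def, List.cons_append]
      abel
  | cons x xs ih =>
    induction bs with
    | nil =>
      have h := ih []
      simp only [List.nil_append, List.cons_append] at h ⊢
      rw [harmAux_cons_cons, h, harmAux_cons_cons x b xs []]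
      simp only [harmAux_nil_right, Finsupp.mapDomain_add, Finsupp.mapDomain_single,
        ← Finsupp.mapDomain_comp, Function.comp_def, List.cons_append]
      abel
    | cons y ys ih' =>
      have h₁ := ih (y :: ys)
      have h₂ := ih ys
      simp only [List.cons_append] at h₁ h₂ ih' ⊢
      rw [harmAux_cons_cons, ih', h₁, h₂, harmAux_cons_cons x y (xs ++ [a]) ys,
        harmAux_cons_cons x y xs (ys ++ [b]), harmAux_cons_cons x y xs ys]
      simp only [Finsupp.mapDomain_add, ← Finsupp.mapDomain_comp, Function.comp_def,
        List.cons_append]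
      abel

lemma harmAux_reverse (k l : List ℕ) :
    harmAux k.reverse l.reverse = mapDomain List.reverse (harmAux k l) := by
  induction k, l using harmAux.induct with
  | case1 l => simp
  | case2 k _ => simp
  | case3 x xs y ys ih₁ ih₂ ih₃ =>
    simp only [List.reverse_cons] at ih₁ ih₂ ih₃ ⊢
    rw [harmAux_append_singleton, ih₁, ih₂, ih₃, harmAux_cons_cons]
    simp only [Finsupp.mapDomain_add, ← Finsupp.mapDomain_comp, Function.comp_def,
      List.reverse_cons]

lemma harm_eq_harmAux (k l : List ℕ) : harm k l = harmAux k l := by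
  rw [harm, harmAux_reverse, ← Finsupp.mapDomain_comp]
  simp

lemma sum_eq_of_mem_support_harmAux {k l m : List ℕ} (hm : m ∈ (harmAux k l).support) :
    m.sum = k.sum + l.sum := by
  induction k, l using harmAux.induct generalizing m with
  | case1 l => simp_all
  | case2 k _ => simp_all
  | case3 x xs y ys ih₁ ih₂ ih₃ =>
    rw [harmAux_cons_cons] at hm
    rcases Finset.mem_union.1 (Finsupp.support_add hm) with hm | hm
    · rcases Finset.mem_union.1 (Finsupp.support_add hm) with hm | hm
      · obtain ⟨m', hm', rfl⟩ := Finset.mem_image.1 (Finsupp.mapDomain_support hm)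
        simp only [List.sum_cons, ih₁ hm']; ring
      · obtain ⟨m', hm', rfl⟩ := Finset.mem_image.1 (Finsupp.mapDomain_support hm)
        simp only [List.sum_cons, ih₂ hm']; ring
    · obtain ⟨m', hm', rfl⟩ := Finset.mem_image.1 (Finsupp.mapDomain_support hm)
      simp only [List.sum_cons, ih₃ hm']; ring

end HarmAux

lemma IsIndex.take {k : List ℕ} (hk : IsIndex k) (i : ℕ) : IsIndex (k.take i) :=
  fun a ha => hk a (List.mem_of_mem_take ha)

lemma IsIndex.drop {k : List ℕ} (hk : IsIndex k) (i : ℕ) : IsIndex (k.drop i) :=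
  fun a ha => hk a (List.mem_of_mem_drop ha)

lemma IsIndex.reverse {k : List ℕ} (hk : IsIndex k) : IsIndex k.reverse :=
  fun a ha => hk a (List.mem_reverse.1 ha)

lemma linearCombination_fun_add {α R M : Type*} [Semiring R] [AddCommMonoid M] [Module R M]
    (f g : α → M) (v : α →₀ R) :
    linearCombination R (fun a => f a + g a) v =
      linearCombination R f v + linearCombination R g v := by
  simp [Finsupp.linearCombination_apply, smul_add, Finsupp.sum_add]

lemma sum_range_succ_sum_range_succ {M : Type*} [AddCommMonoid M] (F : ℕ → ℕ → M) (a b : ℕ) :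
    ∑ i ∈ Finset.range (a + 1), ∑ j ∈ Finset.range (b + 1), F i j =
      F 0 0 + ∑ j ∈ Finset.range b, F 0 (j + 1) + ∑ i ∈ Finset.range a, F (i + 1) 0
        + ∑ i ∈ Finset.range a, ∑ j ∈ Finset.range b, F (i + 1) (j + 1) := by
  simp only [Finset.sum_range_succ', Finset.sum_add_distrib]
  abel

section Coproduct

variable {M : Type*} [AddCommMonoid M]

/-- `g` evaluated on the deconcatenation coproduct `Δm = ∑ᵢ m.take i ⊗ m.drop i`. -/
def sumSplits (g : List ℕ → List ℕ → M) (m : List ℕ) : M :=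
  ∑ i ∈ Finset.range (m.length + 1), g (m.take i) (m.drop i)

lemma sumSplits_cons (g : List ℕ → List ℕ → M) (x : ℕ) (m : List ℕ) :
    sumSplits g (x :: m) = g [] (x :: m) + sumSplits (fun p => g (x :: p)) m := by
  rw [sumSplits, sumSplits, List.length_cons, Finset.sum_range_succ', add_comm]
  simp

variable [Module ℚ M]

noncomputable def linearCombination₂ (g : List ℕ → List ℕ → M) (u v : List ℕ →₀ ℚ) : M :=
  linearCombination ℚ (fun p => linearCombination ℚ (g p) v) u

@[simp] lemma linearCombination₂_single_left (g : List ℕ → List ℕ → M) (p : List ℕ)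
    (v : List ℕ →₀ ℚ) :
    linearCombination₂ g (Finsupp.single p 1) v = linearCombination ℚ (g p) v := by
  simp [linearCombination₂]

lemma linearCombination_comp_reverse_harmAux (f : List ℕ → M) (k l : List ℕ) :
    linearCombination ℚ (fun m => f m.reverse) (harmAux k l) =
      linearCombination ℚ f (harmAux k.reverse l.reverse) := by
  rw [harmAux_reverse, Finsupp.linearCombination_mapDomain]
  rfl

lemma linearCombination_sumSplits_mapDomain_cons (g : List ℕ → List ℕ → M) (x : ℕ)
    (v : List ℕ →₀ ℚ) :
    linearCombination ℚ (sumSplits g) (mapDomain (x :: ·) v) =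
      linearCombination ℚ (g []) (mapDomain (x :: ·) v)
        + linearCombination ℚ (sumSplits fun p => g (x :: p)) v := by
  simp only [Finsupp.linearCombination_mapDomain, Function.comp_def, sumSplits_cons,
    linearCombination_fun_add]

lemma linearCombination_sumSplits_harmAux_cons_cons (g : List ℕ → List ℕ → M) (x y : ℕ)
    (xs ys : List ℕ) :
    linearCombination ℚ (sumSplits g) (harmAux (x :: xs) (y :: ys)) =
      linearCombination ℚ (g []) (harmAux (x :: xs) (y :: ys))
        + linearCombination ℚ (sumSplits fun p => g (y :: p)) (harmAux (x :: xs) ys)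
        + linearCombination ℚ (sumSplits fun p => g (x :: p)) (harmAux xs (y :: ys))
        + linearCombination ℚ (sumSplits fun p => g ((x + y) :: p)) (harmAux xs ys) := by
  simp only [harmAux_cons_cons, map_add, linearCombination_sumSplits_mapDomain_cons]
  abel

lemma linearCombination₂_harmAux_cons_cons_left (g : List ℕ → List ℕ → M) (x y : ℕ)
    (xs ys : List ℕ) (v : List ℕ →₀ ℚ) :
    linearCombination₂ g (harmAux (x :: xs) (y :: ys)) v =
      linearCombination₂ (fun p => g (y :: p)) (harmAux (x :: xs) ys) v
        + linearCombination₂ (fun p => g (x :: p)) (harmAux xs (y :: ys)) v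
        + linearCombination₂ (fun p => g ((x + y) :: p)) (harmAux xs ys) v := by
  simp only [linearCombination₂, harmAux_cons_cons, map_add, Finsupp.linearCombination_mapDomain,
    Function.comp_def]

/-- `g` evaluated on the `(i, j)` term `(k.take i * l.take j) ⊗ (k.drop i * l.drop j)` of `Δk * Δl`. -/
noncomputable def harmSplitTerm (g : List ℕ → List ℕ → M) (k l : List ℕ) (i j : ℕ) : M :=
  linearCombination₂ g (harmAux (k.take i) (l.take j)) (harmAux (k.drop i) (l.drop j))

lemma harmSplitTerm_zero_zero (g : List ℕ → List ℕ → M) (k l : List ℕ) :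
    harmSplitTerm g k l 0 0 = linearCombination ℚ (g []) (harmAux k l) := by
  simp [harmSplitTerm]

lemma harmSplitTerm_zero_succ (g : List ℕ → List ℕ → M) (k : List ℕ) (y : ℕ) (ys : List ℕ)
    (j : ℕ) :
    harmSplitTerm g k (y :: ys) 0 (j + 1) = harmSplitTerm (fun p => g (y :: p)) k ys 0 j := by
  simp [harmSplitTerm]

lemma harmSplitTerm_succ_zero (g : List ℕ → List ℕ → M) (x : ℕ) (xs l : List ℕ) (i : ℕ) :
    harmSplitTerm g (x :: xs) l (i + 1) 0 = harmSplitTerm (fun p => g (x :: p)) xs l i 0 := by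
  simp [harmSplitTerm]

lemma harmSplitTerm_succ_succ (g : List ℕ → List ℕ → M) (x y : ℕ) (xs ys : List ℕ) (i j : ℕ) :
    harmSplitTerm g (x :: xs) (y :: ys) (i + 1) (j + 1) =
      harmSplitTerm (fun p => g (y :: p)) (x :: xs) ys (i + 1) j
        + harmSplitTerm (fun p => g (x :: p)) xs (y :: ys) i (j + 1)
        + harmSplitTerm (fun p => g ((x + y) :: p)) xs ys i j := by
  simp only [harmSplitTerm, List.take_succ_cons, List.drop_succ_cons,
    linearCombination₂_harmAux_cons_cons_left]

lemma sum_harmSplitTerm_cons_cons (g : List ℕ → List ℕ → M) (x y : ℕ) (xs ys : List ℕ) :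
    ∑ i ∈ Finset.range ((x :: xs).length + 1), ∑ j ∈ Finset.range ((y :: ys).length + 1),
        harmSplitTerm g (x :: xs) (y :: ys) i j =
      linearCombination ℚ (g []) (harmAux (x :: xs) (y :: ys))
        + ∑ i ∈ Finset.range ((x :: xs).length + 1), ∑ j ∈ Finset.range (ys.length + 1),
            harmSplitTerm (fun p => g (y :: p)) (x :: xs) ys i j
        + ∑ i ∈ Finset.range (xs.length + 1), ∑ j ∈ Finset.range ((y :: ys).length + 1),
            harmSplitTerm (fun p => g (x :: p)) xs (y :: ys) i j
        + ∑ i ∈ Finset.range (xs.length + 1), ∑ j ∈ Finset.range (ys.length + 1),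
            harmSplitTerm (fun p => g ((x + y) :: p)) xs ys i j := by
  simp only [List.length_cons]
  rw [sum_range_succ_sum_range_succ, Finset.sum_range_succ' _ (xs.length + 1)]
  simp only [Finset.sum_range_succ' _ (ys.length + 1), Finset.sum_add_distrib,
    harmSplitTerm_zero_zero, harmSplitTerm_zero_succ, harmSplitTerm_succ_zero,
    harmSplitTerm_succ_succ]
  abel

theorem linearCombination_sumSplits_harmAux (g : List ℕ → List ℕ → M) (k l : List ℕ) :
    linearCombination ℚ (sumSplits g) (harmAux k l) =
      ∑ i ∈ Finset.range (k.length + 1), ∑ j ∈ Finset.range (l.length + 1),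
        harmSplitTerm g k l i j := by
  induction k, l using harmAux.induct generalizing g with
  | case1 l => simp [sumSplits, harmSplitTerm]
  | case2 k _ => simp [sumSplits, harmSplitTerm]
  | case3 x xs y ys ih₁ ih₂ ih₃ =>
    rw [linearCombination_sumSplits_harmAux_cons_cons, ih₁, ih₂, ih₃,
      sum_harmSplitTerm_cons_cons]

end Coproduct

section Multiplicativity

variable {A : Type*} [CommRing A] [Algebra ℚ A]

lemma linearCombination₂_mul (φ ψ : List ℕ → A) (u v : List ℕ →₀ ℚ) :
    linearCombination₂ (fun p s => φ p * ψ s) u v =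
      linearCombination ℚ φ u * linearCombination ℚ ψ v := by
  have mul_left (c : A) (g : List ℕ → A) (w : List ℕ →₀ ℚ) :
      linearCombination ℚ (fun m => c * g m) w = c * linearCombination ℚ g w :=
    (Finsupp.apply_linearCombination ℚ (LinearMap.mulLeft ℚ c) g w).symm
  have mul_right (c : A) (g : List ℕ → A) (w : List ℕ →₀ ℚ) :
      linearCombination ℚ (fun m => g m * c) w = linearCombination ℚ g w * c :=
    (Finsupp.apply_linearCombination ℚ (LinearMap.mulRight ℚ c) g w).symm
  simp only [linearCombination₂, mul_left, mul_right]

lemma linearCombination_pow_sum_mul_harmAux (c : A) (f : List ℕ → A) (k l : List ℕ) :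
    linearCombination ℚ (fun m => c ^ m.sum * f m) (harmAux k l) =
      c ^ k.sum * c ^ l.sum * linearCombination ℚ f (harmAux k l) := by
  rw [Finsupp.linearCombination_apply, Finsupp.linearCombination_apply, Finsupp.mul_sum]
  refine Finsupp.sum_congr fun m hm => ?_
  rw [sum_eq_of_mem_support_harmAux hm, pow_add, mul_smul_comm]

def zetaXYTerm (x y : A) (f : List ℕ → A) (p s : List ℕ) : A :=
  x ^ p.sum * y ^ s.sum * f p.reverse * f s

variable (x y : A) {f : List ℕ → A}

lemma linearCombination₂_zetaXYTerm_harmAux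
    (hf : ∀ k l, IsIndex k → IsIndex l → linearCombination ℚ f (harmAux k l) = f k * f l)
    {k₁ l₁ k₂ l₂ : List ℕ} (hk₁ : IsIndex k₁) (hl₁ : IsIndex l₁) (hk₂ : IsIndex k₂)
    (hl₂ : IsIndex l₂) :
    linearCombination₂ (zetaXYTerm x y f) (harmAux k₁ l₁) (harmAux k₂ l₂) =
      zetaXYTerm x y f k₁ k₂ * zetaXYTerm x y f l₁ l₂ := by
  have hsplit : zetaXYTerm x y f = fun p s => (x ^ p.sum * f p.reverse) * (y ^ s.sum * f s) := by
    ext p s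
    rw [zetaXYTerm]
    ring
  rw [hsplit, linearCombination₂_mul, linearCombination_pow_sum_mul_harmAux,
    linearCombination_pow_sum_mul_harmAux, linearCombination_comp_reverse_harmAux,
    hf _ _ hk₁.reverse hl₁.reverse, hf _ _ hk₂ hl₂]
  ring

theorem sumSplits_zetaXYTerm_mul
    (hf : ∀ k l, IsIndex k → IsIndex l → linearCombination ℚ f (harmAux k l) = f k * f l)
    {k l : List ℕ} (hk : IsIndex k) (hl : IsIndex l) :
    sumSplits (zetaXYTerm x y f) k * sumSplits (zetaXYTerm x y f) l =
      linearCombination ℚ (sumSplits (zetaXYTerm x y f)) (harmAux k l) := by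
  rw [linearCombination_sumSplits_harmAux, sumSplits, sumSplits, Finset.sum_mul_sum]
  refine Finset.sum_congr rfl fun i _ => Finset.sum_congr rfl fun j _ => ?_
  exact (linearCombination₂_zetaXYTerm_harmAux x y hf (hk.take i) (hl.take j) (hk.drop i)
    (hl.drop j)).symm

end Multiplicativity

lemma zetaXYpoly_eq_sumSplits (Z : List ℕ → Polynomial ℝ) (k : List ℕ) :
    zetaXYpoly Z k =
      sumSplits (zetaXYTerm (MvPolynomial.X 0) (MvPolynomial.X 1)
        fun m => Polynomial.aeval (MvPolynomial.X 2) (Z m)) k :=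
  rfl

theorem zetaXY_harmonic_product_general
    (Zs : List ℕ → Polynomial ℝ)
    (hZs_mul : ∀ k l, IsIndex k → IsIndex l → Zext Zs (harm k l) = Zs k * Zs l)
    (k l : List ℕ) (hk : IsIndex k) (hl : IsIndex l) :
    zetaXYpoly Zs k * zetaXYpoly Zs l
      = (harm k l).sum fun m c => c • zetaXYpoly Zs m := by
  let T : Polynomial ℝ →ₗ[ℚ] MvPolynomial (Fin 3) ℝ :=
    (Polynomial.aeval (MvPolynomial.X 2)).toLinearMap.restrictScalars ℚ
  have hT : ∀ k l, IsIndex k → IsIndex l →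
      linearCombination ℚ (fun m => T (Zs m)) (harmAux k l) = T (Zs k) * T (Zs l) := by
    intro k l hk hl
    calc linearCombination ℚ (fun m => T (Zs m)) (harmAux k l) = T (Zext Zs (harm k l)) := by
          rw [harm_eq_harmAux]
          exact (Finsupp.apply_linearCombination ℚ T Zs _).symm
      _ = T (Zs k) * T (Zs l) := by
          rw [hZs_mul k l hk hl]
          exact map_mul (Polynomial.aeval _) _ _
  simp only [zetaXYpoly_eq_sumSplits, harm_eq_harmAux]
  exact sumSplits_zetaXYTerm_mul (MvPolynomial.X 0) (MvPolynomial.X 1) hT hk hl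

/-- **Harmonic product formula for the polynomial-valued regularization.**
For all indices k, l we have ζ*_{x,y}(k;T)·ζ*_{x,y}(l;T) = ζ*_{x,y}(k * l;T),
where ζ*_{x,y}(·;T) is extended ℚ-linearly to the span of indices. -/
theorem zetaXY_harmonic_product
    (Zs : List ℕ → Polynomial ℝ)
    (hZs_adm : ∀ k, IsIndex k → IsAdmissible k → Zs k = Polynomial.C (mzv k))
    (hZs_one : Zs [1] = Polynomial.X)
    (hZs_mul : ∀ k l, IsIndex k → IsIndex l → Zext Zs (harm k l) = Zs k * Zs l)
    (k l : List ℕ) (hk : IsIndex k) (hl : IsIndex l) :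
    zetaXYpoly Zs k * zetaXYpoly Zs l
      = (harm k l).sum fun m c => c • zetaXYpoly Zs m :=
  zetaXY_harmonic_product_general Zs hZs_mul k l hk hl
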